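/- For p = 3, the Benoit–Saint-Aubin element S_{3,1}(t) = e_1³ + t(2 e_1 e_2 + 2 e_2 e_1) + 4t² e_3 applied to the highest weight vector v of the Verma module V(h_{3,1}(t), c(t)), where c(t) = 13 + 6t + 6t^{-1} and h_{3,1}(t) = -2t - 1, yields a singular vector: e_{-1} S_{3,1}(t) v = 0 and e_{-2} S_{3,1}(t) v = 0. -/

import Mathlib

/-!
Each of `e₋₁`, `e₋₂` is moved to the right through the PBW monomials `e₁³ v`, `e₁e₂ v`,
`e₂e₁ v`, `e₃ v` by the commutation relation until it annihilates `v` or meets `e₀ v = h v`.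
For an arbitrary combination `e₁³ + a e₁e₂ + b e₂e₁ + d e₃` this leaves `e₋₁ S v` in the span of
`e₁² v, e₂ v` and `e₋₂ S v` a multiple of `e₁ v`, with coefficients polynomial in `a, b, d, h, c`;
they all vanish for `a = b = 2t`, `d = 4t²`, `h = -2t - 1`, `c = 13 + 6t + 6t⁻¹`.
-/

section

variable {K M : Type*} [Field K] [AddCommGroup M] [Module K M]

def IsVirasoroRep (e : ℤ → M →ₗ[K] M) (c : K) : Prop :=
  ∀ i j : ℤ, ∀ m : M, e i (e j m) - e j (e i m) =
    ((j : K) - (i : K)) • e (i + j) m +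
      (if i + j = 0 then (((j : K) ^ 3 - (j : K)) / 12) * c else 0) • m

structure IsHighestWeightVector (e : ℤ → M →ₗ[K] M) (h : K) (v : M) : Prop where
  apply_zero : e 0 v = h • v
  apply_neg : ∀ i : ℤ, i < 0 → e i v = 0

namespace IsVirasoroRep

variable {e : ℤ → M →ₗ[K] M} {c h : K} {v : M}

theorem apply_apply (hV : IsVirasoroRep e c) (i j : ℤ) (m : M) :
    e i (e j m) = e j (e i m) + ((j : K) - (i : K)) • e (i + j) m +
      (if i + j = 0 then (((j : K) ^ 3 - (j : K)) / 12) * c else 0) • m := by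
  rw [add_assoc, ← hV i j m, add_sub_cancel]

theorem apply_zero_apply_of_eigen (hV : IsVirasoroRep e c) {μ : K} {m : M}
    (hm : e 0 m = μ • m) (j : ℤ) : e 0 (e j m) = (μ + j) • e j m := by
  rw [hV.apply_apply, hm]
  split_ifs with hj
  · obtain rfl : j = 0 := by simpa using hj
    simp
  · simp [add_smul]

section HighestWeight

variable [CharZero K] (hV : IsVirasoroRep e c) (hv : IsHighestWeightVector e h v)
include hV hv

theorem apply_neg_one_apply_one : e (-1) (e 1 v) = (2 * h) • v := by
  rw [hV.apply_apply]
  norm_num [hv.apply_neg, hv.apply_zero]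
  module

theorem apply_neg_one_apply_two : e (-1) (e 2 v) = (3 : K) • e 1 v := by
  rw [hV.apply_apply]
  norm_num [hv.apply_neg]

theorem apply_neg_one_apply_three : e (-1) (e 3 v) = (4 : K) • e 2 v := by
  rw [hV.apply_apply]
  norm_num [hv.apply_neg]

theorem apply_neg_two_apply_one : e (-2) (e 1 v) = 0 := by
  rw [hV.apply_apply]
  norm_num [hv.apply_neg]

theorem apply_neg_two_apply_two : e (-2) (e 2 v) = (4 * h + c / 2) • v := by
  rw [hV.apply_apply]
  norm_num [hv.apply_neg, hv.apply_zero]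
  module

theorem apply_neg_two_apply_three : e (-2) (e 3 v) = (5 : K) • e 1 v := by
  rw [hV.apply_apply]
  norm_num [hv.apply_neg]

theorem apply_neg_one_apply_one_apply_one :
    e (-1) (e 1 (e 1 v)) = (4 * h + 2) • e 1 v := by
  rw [hV.apply_apply]
  norm_num [hV.apply_neg_one_apply_one hv,
    hV.apply_zero_apply_of_eigen hv.apply_zero]
  module

theorem apply_neg_two_apply_one_apply_one : e (-2) (e 1 (e 1 v)) = (6 * h) • v := by
  rw [hV.apply_apply]
  norm_num [hV.apply_neg_two_apply_one hv, hV.apply_neg_one_apply_one hv]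
  module

theorem apply_neg_one_apply_degree_three (a b d : K) :
    e (-1) (e 1 (e 1 (e 1 v)) + a • e 1 (e 2 v) + b • e 2 (e 1 v) + d • e 3 v) =
      (6 * h + 6 + 3 * a + 3 * b) • e 1 (e 1 v) +
        (a * (2 * h + 4) + b * (2 * h) + 4 * d) • e 2 v := by
  have hv1 := hV.apply_zero_apply_of_eigen hv.apply_zero
  have h111 : e (-1) (e 1 (e 1 (e 1 v))) = (6 * h + 6) • e 1 (e 1 v) := by
    rw [hV.apply_apply]
    norm_num [hV.apply_neg_one_apply_one_apply_one hv,
      hV.apply_zero_apply_of_eigen (hv1 1)]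
    module
  have h12 : e (-1) (e 1 (e 2 v)) = (3 : K) • e 1 (e 1 v) + (2 * h + 4) • e 2 v := by
    rw [hV.apply_apply]
    norm_num [hV.apply_neg_one_apply_two hv, hv1]
    module
  have h21 : e (-1) (e 2 (e 1 v)) = (3 : K) • e 1 (e 1 v) + (2 * h) • e 2 v := by
    rw [hV.apply_apply]
    norm_num [hV.apply_neg_one_apply_one hv]
    module
  simp only [map_add, map_smul, h111, h12, h21, hV.apply_neg_one_apply_three hv]
  module

theorem apply_neg_two_apply_degree_three (a b d : K) :
    e (-2) (e 1 (e 1 (e 1 v)) + a • e 1 (e 2 v) + b • e 2 (e 1 v) + d • e 3 v) =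
      (18 * h + 6 + a * (4 * h + c / 2 + 9) + b * (4 * h + 4 + c / 2) + 5 * d) • e 1 v := by
  have hv1 := hV.apply_zero_apply_of_eigen hv.apply_zero
  have h111 : e (-2) (e 1 (e 1 (e 1 v))) = (18 * h + 6) • e 1 v := by
    rw [hV.apply_apply]
    norm_num [hV.apply_neg_one_apply_one_apply_one hv,
      hV.apply_neg_two_apply_one_apply_one hv]
    module
  have h12 : e (-2) (e 1 (e 2 v)) = (4 * h + c / 2 + 9) • e 1 v := by
    rw [hV.apply_apply]
    norm_num [hV.apply_neg_one_apply_two hv, hV.apply_neg_two_apply_two hv]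
    module
  have h21 : e (-2) (e 2 (e 1 v)) = (4 * h + 4 + c / 2) • e 1 v := by
    rw [hV.apply_apply]
    norm_num [hV.apply_neg_two_apply_one hv, hv1]
    module
  simp only [map_add, map_smul, h111, h12, h21, hV.apply_neg_two_apply_three hv]
  module

end HighestWeight

end IsVirasoroRep

end

/-- For `p = 3`, the Benoit–Saint-Aubin element
`S₃,₁(t) = e₁³ + t(2 e₁e₂ + 2 e₂e₁) + 4t² e₃` applied to the highest weight vector of the
Verma module `V(h₃,₁(t), c(t))`, with `c(t) = 13 + 6t + 6t⁻¹` and `h₃,₁(t) = -2t - 1`,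
yields a singular vector. -/
theorem benoit_saint_aubin_S31_singular
    (t : ℂ) (ht : t ≠ 0)
    (M : Type*) [AddCommGroup M] [Module ℂ M]
    (e : ℤ → M →ₗ[ℂ] M) (v : M)
    (hrel : ∀ i j : ℤ, ∀ m : M,
      e i (e j m) - e j (e i m) =
        ((j : ℂ) - (i : ℂ)) • e (i + j) m +
          (if i + j = 0 then (((j : ℂ) ^ 3 - (j : ℂ)) / 12) * (13 + 6*t + 6*t⁻¹) else 0) • m)
    (hv0 : e 0 v = (-2*t - 1) • v)
    (hvneg : ∀ i : ℤ, i < 0 → e i v = 0) :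
    e (-1) (e 1 (e 1 (e 1 v)) + (2*t) • e 1 (e 2 v) + (2*t) • e 2 (e 1 v)
        + (4*t^2) • e 3 v) = 0 ∧
    e (-2) (e 1 (e 1 (e 1 v)) + (2*t) • e 1 (e 2 v) + (2*t) • e 2 (e 1 v)
        + (4*t^2) • e 3 v) = 0 := by
  have hV : IsVirasoroRep e (13 + 6 * t + 6 * t⁻¹) := hrel
  have hv : IsHighestWeightVector e (-2 * t - 1) v := ⟨hv0, hvneg⟩
  rw [hV.apply_neg_one_apply_degree_three hv, hV.apply_neg_two_apply_degree_three hv]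
  constructor
  · match_scalars <;> ring
  · match_scalars
    field_simp
    ring
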